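/- arXiv:2309.09214 — 6 statements merged into one kernel-verified Lean document; each statement's English description precedes it below -/
import Mathlib

section
/- If R and E are reflexive and symmetric relations on W, then the transitive closure (R ∘ E)⁺ is symmetric. -/
/-- Sequential composition `R ∘ E`: first an `E`-step, then an `R`-step. -/
def relComp {W : Type} (R E : W → W → Prop) (w v : W) : Prop :=
  ∃ u, E w u ∧ R u v

/-- if `R` and `E` are reflexive and symmetric relations on `W`,
then the transitive closure `(R ∘ E)⁺` is symmetric. -/
theorem transGen_relComp_symmetric {W : Type} (R E : W → W → Prop)
    (hRr : Reflexive R) (hRs : Symmetric R) (hEr : Reflexive E) (hEs : Symmetric E) :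
    Symmetric (Relation.TransGen (relComp R E)) := by
  have key : ∀ a b, relComp R E a b → Relation.TransGen (relComp R E) b a := by
    rintro a b ⟨u, hE, hR⟩
    exact Relation.TransGen.tail (Relation.TransGen.single ⟨b, hEr b, hRs hR⟩)
      ⟨a, hEs hE, hRr a⟩
  intro a b h
  induction h with
  | single hab => exact key _ _ hab
  | tail _ hbc ih => exact Relation.TransGen.trans (key _ _ hbc) ih
end

section
/- In any epistemic model with awareness, the MIX axiom is valid: if C^i_j φ holds at w, then φ holds at w and for all v reachable from w via ≡^i_j followed by R_j, C^i_j φ holds at v. That is, C^i_j φ → φ ∧ [≡]^i_j L_j C^i_j φ is valid. -/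
inductive Form (P G : Type) : Type
  | atom : P → Form P G
  | neg  : Form P G → Form P G
  | and  : Form P G → Form P G → Form P G
  | Aw   : G → G → Form P G → Form P G
  | L    : G → Form P G → Form P G
  | box  : G → G → Form P G → Form P G
  | C    : G → G → Form P G → Form P G
  | K    : G → G → Form P G → Form P G

namespace Form

variable {P G : Type}

/-- Implication, defined from negation and conjunction. -/
def imp (φ ψ : Form P G) : Form P G := .neg (.and φ (.neg ψ))

/-- The set of atomic propositions occurring in a formula. -/
def At : Form P G → Set P
  | atom p => {p}
  | neg φ => φ.At
  | and φ ψ => φ.At ∪ ψ.At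
  | Aw _ _ φ => φ.At
  | L _ φ => φ.At
  | box _ _ φ => φ.At
  | C _ _ φ => φ.At
  | K _ _ φ => φ.At

end Form

/-- An epistemic model with awareness (Definition 1). -/
structure AwModel (P G : Type) where
  W : Type
  Wne : Nonempty W
  R : G → W → W → Prop
  Requiv : ∀ j, Equivalence (R j)
  V : P → Set W
  Aset : G → G → Set P
  AwSub : ∀ i j, Aset i j ⊆ Aset i i

variable {P G : Type}

/-- The indistinguishability relation ≡^i_j: agreement on all aware atoms. -/
def AwModel.ind (M : AwModel P G) (i j : G) (w v : M.W) : Prop :=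
  ∀ p ∈ M.Aset i j, w ∈ M.V p ↔ v ∈ M.V p

/-- The composition R_j ∘ ≡^i_j : first an ≡^i_j-step, then an R_j-step. -/
def AwModel.comp (M : AwModel P G) (i j : G) (w v : M.W) : Prop :=
  ∃ u, M.ind i j w u ∧ M.R j u v

/-- Satisfaction relation of ALP (Definition 2). -/
def Sat (M : AwModel P G) : M.W → Form P G → Prop
  | w, .atom p => w ∈ M.V p
  | w, .neg φ => ¬ Sat M w φ
  | w, .and φ ψ => Sat M w φ ∧ Sat M w ψ
  | _, .Aw i j φ => φ.At ⊆ M.Aset i j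
  | w, .L j φ => ∀ v, M.R j w v → Sat M v φ
  | w, .box i j φ => ∀ v, M.ind i j w v → Sat M v φ
  | w, .C i j φ => ∀ v, Relation.TransGen (M.comp i j) w v → Sat M v φ
  | w, .K i j φ => φ.At ⊆ M.Aset i j ∧ ∀ v, Relation.TransGen (M.comp i j) w v → Sat M v φ

/-- the MIX axiom is valid in every epistemic model with awareness:
`C^i_j φ → φ ∧ [≡]^i_j L_j C^i_j φ`. -/
theorem MIX_valid {P G : Type} (M : AwModel P G) (w : M.W) (i j : G) (φ : Form P G)
    (h : Sat M w (Form.C i j φ)) :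
    Sat M w φ ∧ Sat M w (Form.box i j (Form.L j (Form.C i j φ))) := by
  constructor
  · exact h w (Relation.TransGen.single ⟨w, fun p _ => Iff.rfl, (M.Requiv j).refl w⟩)
  · intro v hv u hu x hx
    exact h x (Relation.TransGen.trans (Relation.TransGen.single ⟨v, hv, hu⟩) hx)
end

section
/- In any epistemic model with awareness, the induction axiom IND is valid: C^i_j(φ → [≡]^i_j L_j φ) → (φ → C^i_j φ). -/
variable {P G : Type}

/-- the induction axiom IND is valid in every epistemic model with
awareness: `C^i_j(φ → [≡]^i_j L_j φ) → (φ → C^i_j φ)`. -/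
theorem IND_valid {P G : Type} (M : AwModel P G) (w : M.W) (i j : G) (φ : Form P G)
    (h1 : Sat M w (Form.C i j (Form.imp φ (Form.box i j (Form.L j φ)))))
    (h2 : Sat M w φ) :
    Sat M w (Form.C i j φ) := by
  intro v hv
  -- the implication, unfolded: at any successor u, Sat φ → ∀ u' ind, ∀ v' R, Sat φ
  have himp : ∀ u, Relation.TransGen (M.comp i j) w u → Sat M u φ →
      ∀ u', M.ind i j u u' → ∀ v', M.R j u' v' → Sat M v' φ := by
    intro u hu hφ u' hind v' hR
    have := h1 u hu
    simp only [Form.imp, Sat, not_and, not_not] at this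
    exact this hφ u' hind v' hR
  -- w is a successor of itself
  have hrefl : ∀ x : M.W, M.comp i j x x :=
    fun x => ⟨x, fun p _ => Iff.rfl, (M.Requiv j).refl x⟩
  -- strengthen: prove Sat v φ ∧ TransGen w v by induction
  have key : ∀ v, Relation.TransGen (M.comp i j) w v → Sat M v φ := by
    intro v hv
    induction hv with
    | single h =>
      obtain ⟨u, hind, hR⟩ := h
      exact himp w (Relation.TransGen.single (hrefl w)) h2 u hind _ hR
    | tail hwb h ih =>
      obtain ⟨u, hind, hR⟩ := h
      exact himp _ hwb ih u hind _ hR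
  exact key v hv
end

section
/- In any epistemic model with awareness, the formula ¬K^i_j φ ∧ A^i_j ¬K^i_j φ → K^i_j ¬K^i_j φ is valid, where K^i_j φ holds iff both A^i_j φ and C^i_j φ hold. -/
variable {P G : Type}

lemma comp_rev {P G : Type} (M : AwModel P G) (i j : G) {a b : M.W}
    (h : M.comp i j a b) : Relation.TransGen (M.comp i j) b a := by
  obtain ⟨u, hind, hR⟩ := h
  refine Relation.TransGen.head ⟨b, fun p hp => Iff.rfl, (M.Requiv j).symm hR⟩ ?_
  exact Relation.TransGen.single ⟨a, fun p hp => ((hind p hp)).symm, (M.Requiv j).refl a⟩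

lemma transGen_comp_symm {P G : Type} (M : AwModel P G) (i j : G) {a b : M.W}
    (h : Relation.TransGen (M.comp i j) a b) : Relation.TransGen (M.comp i j) b a := by
  induction h with
  | single h => exact comp_rev M i j h
  | tail _ h ih => exact (comp_rev M i j h).trans ih

/-- `¬K^i_j φ ∧ A^i_j ¬K^i_j φ → K^i_j ¬K^i_j φ` is valid in every
epistemic model with awareness. -/
theorem negintro_K_valid {P G : Type} (M : AwModel P G) (w : M.W) (i j : G) (φ : Form P G)
    (h1 : Sat M w (Form.neg (Form.K i j φ)))
    (h2 : Sat M w (Form.Aw i j (Form.neg (Form.K i j φ)))) :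
    Sat M w (Form.K i j (Form.neg (Form.K i j φ))) := by
  have hAt : Form.At φ ⊆ M.Aset i j := h2
  refine ⟨hAt, fun v hv hK => ?_⟩
  obtain ⟨u, hwu, hu⟩ : ∃ u, Relation.TransGen (M.comp i j) w u ∧ ¬ Sat M u φ := by
    by_contra hcon
    push_neg at hcon
    exact h1 ⟨hAt, fun u hu => hcon u hu⟩
  exact hu (hK.2 u ((transGen_comp_symm M i j hv).trans hwu))
end

section
/- Canonical existence lemma for the composed modality: if Γ and Δ are maximal consistent sets in a closure Φ and the formula ⋀Γ ∧ ¬[≡]^i_j L_j ¬⋀Δ is consistent, then (Γ, Δ) ∈ C(R_j) ∘ C(≡^i_j), i.e., every φ with [≡]^i_j L_j φ ∈ Γ satisfies φ ∈ Δ. -/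
variable {P G : Type}

namespace Form

/-- The set `sub(ψ)` of subformulas of a formula (including itself). -/
def sub : Form P G → Set (Form P G)
  | atom p => {atom p}
  | neg φ => insert (neg φ) φ.sub
  | and φ ψ => insert (and φ ψ) (φ.sub ∪ ψ.sub)
  | Aw i j φ => insert (Aw i j φ) φ.sub
  | L j φ => insert (L j φ) φ.sub
  | box i j φ => insert (box i j φ) φ.sub
  | C i j φ => insert (C i j φ) φ.sub
  | K i j φ => insert (K i j φ) φ.sub

/-- A formula is a negation if it is of the form `¬ψ`. -/
def isNeg : Form P G → Prop
  | neg _ => True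
  | _ => False

end Form

/-- The closure `cl(φ)` (Definition 4), as the smallest set of formulas
containing `φ` and closed under the conditions 1–11. -/
inductive Cl (φ : Form P G) : Form P G → Prop
  /- 1. φ ∈ cl(φ) -/
  | root : Cl φ φ
  /- 2. closure under subformulas -/
  | subf {ψ χ} : Cl φ ψ → χ ∈ ψ.sub → Cl φ χ
  /- 3. single negations -/
  | negc {ψ} : Cl φ ψ → ¬ ψ.isNeg → Cl φ (Form.neg ψ)
  /- 4. atoms -/
  | atomA {p} (i j : G) : Cl φ (Form.atom p) → Cl φ (Form.Aw i j (Form.atom p))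
  | atomAA {p} (i j : G) : Cl φ (Form.atom p) →
      Cl φ (Form.and (Form.Aw i i (Form.atom p)) (Form.Aw i j (Form.atom p)))
  | atomBox {p} (i j : G) : Cl φ (Form.atom p) → Cl φ (Form.box i j (Form.atom p))
  /- 5. awareness formulas -/
  | awL {i j ψ} (k : G) : Cl φ (Form.Aw i j ψ) → Cl φ (Form.L k (Form.Aw i j ψ))
  | awSub {i j ψ χ} : Cl φ (Form.Aw i j ψ) → χ ∈ ψ.sub → Cl φ (Form.Aw i j χ)
  /- 6. L_j ψ ∈ sub(φ) -/
  | lPos {j ψ} : Form.L j ψ ∈ φ.sub → Cl φ (Form.L j (Form.L j ψ))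
  | lNeg {j ψ} : Form.L j ψ ∈ φ.sub → Cl φ (Form.L j (Form.neg (Form.L j ψ)))
  /- 7. [≡]^i_j ψ ∈ sub(φ) -/
  | boxPos {i j ψ} : Form.box i j ψ ∈ φ.sub → Cl φ (Form.box i j (Form.box i j ψ))
  | boxNeg {i j ψ} : Form.box i j ψ ∈ φ.sub → Cl φ (Form.box i j (Form.neg (Form.box i j ψ)))
  /- 8. C^i_j ψ -/
  | cMix {i j ψ} : Cl φ (Form.C i j ψ) → Cl φ (Form.box i j (Form.L j (Form.C i j ψ)))
  /- 9. L_k O ψ for O ∈ {A^i_j, C^i_j} -/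
  | lAwPos {k i j ψ} : Cl φ (Form.L k (Form.Aw i j ψ)) →
      Cl φ (Form.L k (Form.L k (Form.Aw i j ψ)))
  | lAwNeg {k i j ψ} : Cl φ (Form.L k (Form.Aw i j ψ)) →
      Cl φ (Form.L k (Form.neg (Form.L k (Form.Aw i j ψ))))
  | lCPos {k i j ψ} : Cl φ (Form.L k (Form.C i j ψ)) →
      Cl φ (Form.L k (Form.L k (Form.C i j ψ)))
  | lCNeg {k i j ψ} : Cl φ (Form.L k (Form.C i j ψ)) →
      Cl φ (Form.L k (Form.neg (Form.L k (Form.C i j ψ))))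
  /- 10. [≡]^i_j L_j C^i_j ψ -/
  | blcPos {i j ψ} : Cl φ (Form.box i j (Form.L j (Form.C i j ψ))) →
      Cl φ (Form.box i j (Form.box i j (Form.L j (Form.C i j ψ))))
  | blcNeg {i j ψ} : Cl φ (Form.box i j (Form.L j (Form.C i j ψ))) →
      Cl φ (Form.box i j (Form.neg (Form.box i j (Form.L j (Form.C i j ψ)))))
  /- 11. K^i_j ψ -/
  | kAw {i j ψ} : Cl φ (Form.K i j ψ) → Cl φ (Form.Aw i j ψ)
  | kC {i j ψ} : Cl φ (Form.K i j ψ) → Cl φ (Form.C i j ψ)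

namespace Form
/-- Biconditional. -/
def iff' (φ ψ : Form P G) : Form P G := Form.and (φ.imp ψ) (ψ.imp φ)
end Form

/-- A formula is a propositional tautology if it is true under every boolean
valuation of formulas that respects negation and conjunction (so all
non-boolean formulas are treated as atoms). -/
def IsTaut (φ : Form P G) : Prop :=
  ∀ v : Form P G → Bool, (∀ ψ, v (Form.neg ψ) = !(v ψ)) →
    (∀ ψ χ, v (Form.and ψ χ) = (v ψ && v χ)) → v φ = true

/-- The Hilbert system ALP (Table 1). -/
inductive Prov : Form P G → Prop
  | taut {φ} : IsTaut φ → Prov φ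
  | AN (i j : G) (φ) : Prov ((Form.Aw i j φ).iff' (Form.Aw i j (Form.neg φ)))
  | AC (i j : G) (φ ψ) :
      Prov ((Form.Aw i j (Form.and φ ψ)).iff' (Form.and (Form.Aw i j φ) (Form.Aw i j ψ)))
  | AA (i j k l : G) (φ) : Prov ((Form.Aw i j φ).iff' (Form.Aw i j (Form.Aw k l φ)))
  | AEq (i j k l : G) (φ) : Prov ((Form.Aw i j φ).iff' (Form.Aw i j (Form.box k l φ)))
  | ACM (i j k l : G) (φ) : Prov ((Form.Aw i j φ).iff' (Form.Aw i j (Form.C k l φ)))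
  | AL (i j k : G) (φ) : Prov ((Form.Aw i j φ).iff' (Form.Aw i j (Form.L k φ)))
  | AK (i j k l : G) (φ) : Prov ((Form.Aw i j φ).iff' (Form.Aw i j (Form.K k l φ)))
  | ANEq (i j : G) (p : P) :
      Prov ((Form.and (Form.Aw i j (Form.atom p)) (Form.atom p)).imp (Form.box i j (Form.atom p)))
  | KL (j : G) (φ ψ) : Prov ((Form.L j (φ.imp ψ)).imp ((Form.L j φ).imp (Form.L j ψ)))
  | TL (j : G) (φ) : Prov ((Form.L j φ).imp φ)
  | fiveL (j : G) (φ) : Prov ((Form.neg (Form.L j φ)).imp (Form.L j (Form.neg (Form.L j φ))))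
  | KEq (i j : G) (φ ψ) :
      Prov ((Form.box i j (φ.imp ψ)).imp ((Form.box i j φ).imp (Form.box i j ψ)))
  | TEq (i j : G) (φ) : Prov ((Form.box i j φ).imp φ)
  | fiveEq (i j : G) (φ) :
      Prov ((Form.neg (Form.box i j φ)).imp (Form.box i j (Form.neg (Form.box i j φ))))
  | KC (i j : G) (φ ψ : Form P G) : Prov ((Form.C i j (φ.imp ψ)).imp ((Form.C i j φ).imp (Form.C i j ψ)))
  | MIX (i j : G) (φ : Form P G) :
      Prov ((Form.C i j φ).imp (Form.and φ (Form.box i j (Form.L j (Form.C i j φ)))))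
  | IND (i j : G) (φ : Form P G) :
      Prov ((Form.C i j (φ.imp (Form.box i j (Form.L j φ)))).imp (φ.imp (Form.C i j φ)))
  | KAC (i j : G) (φ : Form P G) : Prov ((Form.K i j φ).iff' (Form.and (Form.Aw i j φ) (Form.C i j φ)))
  | mp {φ ψ : Form P G} : Prov (φ.imp ψ) → Prov φ → Prov ψ
  | LG (j : G) {φ} : Prov φ → Prov (Form.L j φ)
  | EqG (i j : G) {φ} : Prov φ → Prov (Form.box i j φ)
  | CG (i j : G) {φ} : Prov φ → Prov (Form.C i j φ)

/-- `Γ ⊢ φ`: some finite list of members of `Γ`, taken as hypotheses, yields a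
proof of `φ` in ALP. -/
def Derives (Γ : Set (Form P G)) (φ : Form P G) : Prop :=
  ∃ L : List (Form P G), (∀ ψ ∈ L, ψ ∈ Γ) ∧ Prov (L.foldr Form.imp φ)

/-- `Γ ⊬ ⊥`: `Γ` does not derive a contradiction. -/
def Consistent (Γ : Set (Form P G)) : Prop :=
  ¬ ∃ φ, Derives Γ φ ∧ Derives Γ (Form.neg φ)

/-- A maximal consistent set in `Φ`: a consistent `Γ ⊆ Φ` such that no
consistent subset of `Φ` strictly contains it. -/
def MCSin (Φ Γ : Set (Form P G)) : Prop :=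
  Γ ⊆ Φ ∧ Consistent Γ ∧ ∀ Γ', Γ ⊂ Γ' → Γ' ⊆ Φ → ¬ Consistent Γ'

/-- Conjunction of a nonempty list of formulas, given as head `a` and tail `l`. -/
def bigConj (a : Form P G) (l : List (Form P G)) : Form P G :=
  l.foldr Form.and a

section Aux

variable {P G : Type}

private lemma tautK (A B : Form P G) : Prov (A.imp (B.imp A)) := by
  apply Prov.taut; intro v hn ha
  simp only [Form.imp, hn, ha]
  cases v A <;> cases v B <;> simp

private lemma tautS (A B C : Form P G) :
    Prov ((A.imp (B.imp C)).imp ((A.imp B).imp (A.imp C))) := by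
  apply Prov.taut; intro v hn ha
  simp only [Form.imp, hn, ha]
  cases v A <;> cases v B <;> cases v C <;> simp

private lemma impSelf (A : Form P G) : Prov (A.imp A) := by
  apply Prov.taut; intro v hn ha
  simp only [Form.imp, hn, ha]
  cases v A <;> simp

private lemma andLeft (A B : Form P G) : Prov ((A.and B).imp A) := by
  apply Prov.taut; intro v hn ha
  simp only [Form.imp, hn, ha]
  cases v A <;> cases v B <;> simp

private lemma andRight (A B : Form P G) : Prov ((A.and B).imp B) := by
  apply Prov.taut; intro v hn ha
  simp only [Form.imp, hn, ha]
  cases v A <;> cases v B <;> simp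

private lemma impTrans {A B C : Form P G} (h1 : Prov (A.imp B)) (h2 : Prov (B.imp C)) :
    Prov (A.imp C) := by
  have t : Prov ((A.imp B).imp ((B.imp C).imp (A.imp C))) := by
    apply Prov.taut; intro v hn ha
    simp only [Form.imp, hn, ha]
    cases v A <;> cases v B <;> cases v C <;> simp
  exact Prov.mp (Prov.mp t h1) h2

private lemma negOfImpBoth {A B : Form P G} (h1 : Prov (A.imp B))
    (h2 : Prov (A.imp (Form.neg B))) : Prov (Form.neg A) := by
  have t : Prov ((A.imp B).imp ((A.imp (Form.neg B)).imp (Form.neg A))) := by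
    apply Prov.taut; intro v hn ha
    simp only [Form.imp, hn, ha]
    cases v A <;> cases v B <;> simp
  exact Prov.mp (Prov.mp t h1) h2

private lemma negAndToImp {A B : Form P G} (h : Prov (Form.neg (A.and B))) :
    Prov (B.imp (Form.neg A)) := by
  have t : Prov ((Form.neg (A.and B)).imp (B.imp (Form.neg A))) := by
    apply Prov.taut; intro v hn ha
    simp only [Form.imp, hn, ha]
    cases v A <;> cases v B <;> simp
  exact Prov.mp t h

private lemma impToNegAnd {A B : Form P G} (h : Prov (A.imp B)) :
    Prov (Form.neg (A.and (Form.neg B))) := by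
  have t : Prov ((A.imp B).imp (Form.neg (A.and (Form.neg B)))) := by
    apply Prov.taut; intro v hn ha
    simp only [Form.imp, hn, ha]
    cases v A <;> cases v B <;> simp
  exact Prov.mp t h

private lemma peel (χ ψ : Form P G) :
    ∀ L : List (Form P G), Prov (χ.imp (L.foldr Form.imp ψ)) →
      (∀ l ∈ L, Prov (χ.imp l)) → Prov (χ.imp ψ)
  | [], h, _ => h
  | l :: L, h, hl =>
    peel χ ψ L
      (Prov.mp (Prov.mp (tautS χ l (L.foldr Form.imp ψ)) h) (hl l (by simp)))
      (fun x hx => hl x (by simp [hx]))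

private lemma bigConj_imp (d : Form P G) :
    ∀ (L : List (Form P G)) (ψ : Form P G), ψ ∈ d :: L → Prov ((bigConj d L).imp ψ)
  | [], ψ, h => by
    have : ψ = d := by simpa using h
    rw [this]; exact impSelf d
  | a :: L, ψ, h => by
    have hb : bigConj d (a :: L) = Form.and a (bigConj d L) := rfl
    rw [hb]
    by_cases h2 : ψ = a
    · rw [h2]; exact andLeft _ _
    · have h3 : ψ ∈ d :: L := by
        rcases List.mem_cons.1 h with h1 | h1
        · simp [h1]
        · rcases List.mem_cons.1 h1 with h4 | h4
          · exact absurd h4 h2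
          · simp [h4]
      exact impTrans (andRight a (bigConj d L)) (bigConj_imp d L ψ h3)

private lemma mem_sub_self : ∀ φ : Form P G, φ ∈ φ.sub := by
  intro φ; cases φ <;> simp [Form.sub]

end Aux

theorem canonical_existence_composed (φ0 : Form P G) (Φ : Set (Form P G))
    (hΦ : Φ = {ψ | Cl φ0 ψ}) (i j : G) (Γ Δ : Set (Form P G))
    (hΓ : MCSin Φ Γ) (hΔ : MCSin Φ Δ)
    (γ δ : Form P G) (LΓ LΔ : List (Form P G))
    (hLΓ : ∀ ψ, ψ ∈ γ :: LΓ ↔ ψ ∈ Γ) (hLΔ : ∀ ψ, ψ ∈ δ :: LΔ ↔ ψ ∈ Δ)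
    (hcon : ¬ Prov (Form.neg (Form.and (bigConj γ LΓ)
      (Form.neg (Form.box i j (Form.L j (Form.neg (bigConj δ LΔ)))))))) :
    ∀ φ : Form P G, Form.box i j (Form.L j φ) ∈ Γ → φ ∈ Δ := by
  intro φ hbox
  set D := bigConj δ LΔ with hD
  set Gm := bigConj γ LΓ with hG
  -- φ is in the closure Φ
  have hφΦ : φ ∈ Φ := by
    have h1 : Form.box i j (Form.L j φ) ∈ Φ := hΓ.1 hbox
    rw [hΦ] at h1 ⊢
    refine Cl.subf h1 ?_
    show φ ∈ (Form.box i j (Form.L j φ)).sub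
    simp only [Form.sub]
    exact Set.mem_insert_iff.2 (Or.inr (Set.mem_insert_iff.2 (Or.inr (mem_sub_self φ))))
  -- insert φ Δ is consistent
  have hcons : Consistent (insert φ Δ) := by
    intro hInc
    obtain ⟨ψ, ⟨L1, hL1, hp1⟩, ⟨L2, hL2, hp2⟩⟩ := hInc
    set χ : Form P G := D.and φ with hχ
    have hlift : ∀ (L : List (Form P G)), (∀ l ∈ L, l ∈ insert φ Δ) →
        ∀ ρ, Prov (L.foldr Form.imp ρ) → Prov (χ.imp ρ) := by
      intro L hL ρ hp
      refine peel χ ρ L (Prov.mp (tautK _ χ) hp) ?_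
      intro l hl
      rcases Set.mem_insert_iff.1 (hL l hl) with h | h
      · rw [h]; exact andRight D φ
      · exact impTrans (andLeft D φ) (bigConj_imp δ LΔ l ((hLΔ l).2 h))
    have h1 : Prov (χ.imp ψ) := hlift L1 hL1 ψ hp1
    have h2 : Prov (χ.imp (Form.neg ψ)) := hlift L2 hL2 (Form.neg ψ) hp2
    have hnegχ : Prov (Form.neg χ) := negOfImpBoth h1 h2
    have hφnD : Prov (φ.imp (Form.neg D)) := negAndToImp hnegχ
    have hL : Prov ((Form.L j φ).imp (Form.L j (Form.neg D))) :=
      Prov.mp (Prov.KL j φ (Form.neg D)) (Prov.LG j hφnD)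
    have hB : Prov ((Form.box i j (Form.L j φ)).imp (Form.box i j (Form.L j (Form.neg D)))) :=
      Prov.mp (Prov.KEq i j _ _) (Prov.EqG i j hL)
    have hGb : Prov (Gm.imp (Form.box i j (Form.L j φ))) :=
      bigConj_imp γ LΓ _ ((hLΓ _).2 hbox)
    have hfin : Prov (Gm.imp (Form.box i j (Form.L j (Form.neg D)))) := impTrans hGb hB
    exact hcon (impToNegAnd hfin)
  -- conclude by maximality of Δ
  by_contra hφΔ
  exact hΔ.2.2 (insert φ Δ) (Set.ssubset_insert hφΔ)
    (Set.insert_subset hφΦ hΔ.1) hcons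
end

section
/- Truth lemma direction for C^i_j via paths (left-to-right): if C^i_j φ ∈ Φ and C^i_j φ ∈ Γ for a maximal consistent set Γ in Φ, then for every C^i_j-path Γ_0, ..., Γ_n with Γ_0 = Γ (where consecutive sets are related by C(R_j) ∘ C(≡^i_j)), φ ∈ Γ_k for all k. -/
variable {P G : Type}

/-- The canonical relation `C(≡^i_j)`: `{φ : [≡]^i_j φ ∈ w} ⊆ v`. -/
def CEq (i j : G) (w v : Set (Form P G)) : Prop :=
  ∀ φ : Form P G, Form.box i j φ ∈ w → φ ∈ v

/-- The canonical relation `C(R_j)`: `{φ : L_j φ ∈ w} ⊆ v`. -/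
def CR (j : G) (w v : Set (Form P G)) : Prop :=
  ∀ φ : Form P G, Form.L j φ ∈ w → φ ∈ v

/-- One step of a `C^i_j`-path: the composition `C(R_j) ∘ C(≡^i_j)`
(first a `C(≡^i_j)`-step, then a `C(R_j)`-step), through a canonical world. -/
def canComp (Φ : Set (Form P G)) (i j : G) (w v : Set (Form P G)) : Prop :=
  ∃ u, MCSin Φ u ∧ CEq i j w u ∧ CR j u v

/-!
`C^i_j ψ` is propagated along the path: by MIX, `C^i_j ψ ∈ Γ_k` yields
`[≡]^i_j L_j C^i_j ψ ∈ Γ_k` (this formula lies in `Φ`, so maximality puts it in `Γ_k`),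
and the two canonical steps `C(≡^i_j)` and `C(R_j)` strip the two boxes, giving
`C^i_j ψ ∈ Γ_{k+1}`. At every point of the path MIX then gives `ψ` itself.

Derivability is handled semantically: a hypothesis list `L` turns `X` into
`L.foldr Form.imp X`, whose boolean value is "all of `L` true implies `X` true",
so the structural rules of `Derives` are instances of the tautology axiom.
-/

namespace Form

lemma mem_sub_self (ψ : Form P G) : ψ ∈ ψ.sub := by
  cases ψ <;> simp [sub]

lemma eval_imp {v : Form P G → Bool} (hn : ∀ ψ, v (neg ψ) = !v ψ)
    (ha : ∀ ψ χ, v (and ψ χ) = (v ψ && v χ)) (X Y : Form P G) :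
    v (X.imp Y) = true ↔ (v X = true → v Y = true) := by
  simp only [imp, hn, ha]
  cases v X <;> cases v Y <;> decide

lemma eval_foldr_imp {v : Form P G → Bool} (hn : ∀ ψ, v (neg ψ) = !v ψ)
    (ha : ∀ ψ χ, v (and ψ χ) = (v ψ && v χ)) (L : List (Form P G)) (X : Form P G) :
    v (L.foldr imp X) = true ↔ ((∀ a ∈ L, v a = true) → v X = true) := by
  induction L with
  | nil => simp
  | cons a t ih => simp only [List.foldr_cons, eval_imp hn ha, ih, List.forall_mem_cons]; tauto

end Form

lemma Cl.of_C {φ0 : Form P G} {i j : G} {ψ : Form P G} (h : Cl φ0 (Form.C i j ψ)) :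
    Cl φ0 ψ :=
  Cl.subf h (by simp [Form.sub, Form.mem_sub_self])

namespace Derives

variable {Γ : Set (Form P G)} {X Y : Form P G}

lemma of_prov (h : Prov X) : Derives Γ X :=
  ⟨[], by simp, h⟩

lemma of_mem (h : X ∈ Γ) : Derives Γ X :=
  ⟨[X], by simpa using h, Prov.taut fun v hn ha => by simp [Form.eval_imp hn ha]⟩

lemma mp (hXY : Derives Γ (X.imp Y)) (hX : Derives Γ X) : Derives Γ Y := by
  obtain ⟨L₁, hL₁, h₁⟩ := hXY
  obtain ⟨L₂, hL₂, h₂⟩ := hX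
  have taut : Prov ((L₁.foldr Form.imp (X.imp Y)).imp
      ((L₂.foldr Form.imp X).imp ((L₁ ++ L₂).foldr Form.imp Y))) :=
    Prov.taut fun v hn ha => by
      simp only [Form.eval_imp hn ha, Form.eval_foldr_imp hn ha, List.mem_append]
      intro h₁ h₂ hL
      exact h₁ (fun a h => hL a (.inl h)) (h₂ fun a h => hL a (.inr h))
  exact ⟨L₁ ++ L₂, fun a ha => (List.mem_append.1 ha).elim (hL₁ a) (hL₂ a),
    Prov.mp (Prov.mp taut h₁) h₂⟩

lemma of_prov_imp (hXY : Prov (X.imp Y)) (hX : Derives Γ X) : Derives Γ Y :=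
  (of_prov hXY).mp hX

lemma and_left (h : Derives Γ (X.and Y)) : Derives Γ X :=
  of_prov_imp (Prov.taut fun v hn ha => by simp_all [Form.eval_imp hn ha]) h

lemma and_right (h : Derives Γ (X.and Y)) : Derives Γ Y :=
  of_prov_imp (Prov.taut fun v hn ha => by simp_all [Form.eval_imp hn ha]) h

open Classical in
lemma imp_of_insert (h : Derives (insert X Γ) Y) : Derives Γ (X.imp Y) := by
  obtain ⟨L, hL, hY⟩ := h
  refine ⟨L.filter (· ≠ X), fun a ha => ?_, Prov.mp ?_ hY⟩
  · obtain ⟨haL, haX⟩ := by simpa using ha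
    exact (hL a haL).resolve_left haX
  · refine Prov.taut fun v hn ha => ?_
    simp only [Form.eval_imp hn ha, Form.eval_foldr_imp hn ha, List.mem_filter]
    intro hLY hL' hX
    refine hLY fun a haL => ?_
    by_cases haX : a = X
    · exact haX ▸ hX
    · exact hL' a ⟨haL, by simpa using haX⟩

lemma mix {i j : G} {ψ : Form P G} (hC : Form.C i j ψ ∈ Γ) :
    Derives Γ (Form.and ψ (Form.box i j (Form.L j (Form.C i j ψ)))) :=
  of_prov_imp (Prov.MIX i j ψ) (of_mem hC)

end Derives

lemma Consistent.insert_of_derives {Γ : Set (Form P G)} {X : Form P G} (hΓ : Consistent Γ)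
    (hX : Derives Γ X) : Consistent (insert X Γ) := by
  rintro ⟨Y, hY, hnY⟩
  exact hΓ ⟨Y, hY.imp_of_insert.mp hX, hnY.imp_of_insert.mp hX⟩

namespace MCSin

variable {Φ Γ : Set (Form P G)} {i j : G} {ψ : Form P G}

lemma mem_of_derives {X : Form P G} (hΓ : MCSin Φ Γ) (hX : Derives Γ X) (hXΦ : X ∈ Φ) :
    X ∈ Γ := by
  by_contra hXΓ
  exact hΓ.2.2 _ (Set.ssubset_insert hXΓ) (Set.insert_subset hXΦ hΓ.1)
    (hΓ.2.1.insert_of_derives hX)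

lemma mem_of_C_mem (hΓ : MCSin Φ Γ) (hψ : ψ ∈ Φ) (hC : Form.C i j ψ ∈ Γ) : ψ ∈ Γ :=
  hΓ.mem_of_derives (Derives.mix hC).and_left hψ

lemma C_mem_of_canComp {Δ : Set (Form P G)} (hΓ : MCSin Φ Γ)
    (hbox : Form.box i j (Form.L j (Form.C i j ψ)) ∈ Φ) (hC : Form.C i j ψ ∈ Γ)
    (hstep : canComp Φ i j Γ Δ) : Form.C i j ψ ∈ Δ := by
  obtain ⟨_, _, hEq, hR⟩ := hstep
  exact hR _ (hEq _ (hΓ.mem_of_derives (Derives.mix hC).and_right hbox))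

end MCSin

lemma C_mem_of_path {Φ : Set (Form P G)} {i j : G} {ψ : Form P G}
    (hbox : Form.box i j (Form.L j (Form.C i j ψ)) ∈ Φ) {n : ℕ} {f : ℕ → Set (Form P G)}
    (h₀ : Form.C i j ψ ∈ f 0) (hMCS : ∀ k, MCSin Φ (f k))
    (hsteps : ∀ k < n, canComp Φ i j (f k) (f (k + 1))) :
    ∀ k ≤ n, Form.C i j ψ ∈ f k := by
  intro k hk
  induction k with
  | zero => exact h₀
  | succ k ih =>
    exact (hMCS k).C_mem_of_canComp hbox (ih (by omega)) (hsteps k (by omega))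

theorem C_path_truth_general (φ0 : Form P G) (Φ : Set (Form P G))
    (hΦ : Φ = {χ | Cl φ0 χ}) (i j : G) (ψ : Form P G)
    (hψΦ : Form.C i j ψ ∈ Φ) (Γ : Set (Form P G))
    (hψΓ : Form.C i j ψ ∈ Γ) :
    ∀ (n : ℕ) (f : ℕ → Set (Form P G)), f 0 = Γ →
      (∀ k, MCSin Φ (f k)) →
      (∀ k < n, canComp Φ i j (f k) (f (k + 1))) →
      ∀ k ≤ n, ψ ∈ f k := by
  subst hΦ
  intro n f hf₀ hMCS hsteps k hk
  have hC : ∀ k ≤ n, Form.C i j ψ ∈ f k :=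
    C_mem_of_path (Cl.cMix hψΦ) (hf₀ ▸ hψΓ) hMCS hsteps
  exact (hMCS k).mem_of_C_mem (Cl.of_C hψΦ) (hC k hk)

/-- truth lemma direction for `C^i_j` via paths, left-to-right:
if `C^i_j ψ ∈ Φ` and `C^i_j ψ ∈ Γ` for a maximal consistent set `Γ` in the
closure `Φ`, then every `C^i_j`-path `Γ_0, …, Γ_n` from `Γ` is a `ψ`-path:
`ψ ∈ Γ_k` for all `k ≤ n`. -/
theorem C_path_truth (φ0 : Form P G) (Φ : Set (Form P G))
    (hΦ : Φ = {χ | Cl φ0 χ}) (i j : G) (ψ : Form P G)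
    (hψΦ : Form.C i j ψ ∈ Φ) (Γ : Set (Form P G)) (hΓ : MCSin Φ Γ)
    (hψΓ : Form.C i j ψ ∈ Γ) :
    ∀ (n : ℕ) (f : ℕ → Set (Form P G)), f 0 = Γ →
      (∀ k, MCSin Φ (f k)) →
      (∀ k < n, canComp Φ i j (f k) (f (k + 1))) →
      ∀ k ≤ n, ψ ∈ f k :=
  C_path_truth_general φ0 Φ hΦ i j ψ hψΦ Γ hψΓ
end
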